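/- Let j_n denote the number of DC-equivalence classes of paths of length n in ℰ. Then j_0 = 1, j_1 = 0, j_2 = j_3 = j_4 = 1, j_5 = 2, j_6 = 2, and j_n = 2j_{n−1} − j_{n−2} + j_{n−5} − j_{n−6} + j_{n−7} for all n ≥ 7. -/

import Mathlib

/-!
A DC-class is determined by its signature, which records the size `k` of each `D C_k` at its
position. A `D C_k` ends on the axis, so cutting a path just after its first one, at position
`L`, leaves a path of ℰ; conversely `B U^(k+1) D C_k Q`, with `B` free of `D C` patterns,
realises every admissible `(L, k)`. Admissible means `2 ≤ k ≤ L - 1` and `k ≠ L - 2`, since a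
path of ℰ is never at height `i - 1` after `i` steps. Hence
`j n = [n ≠ 1] + ∑_{L ≥ 3} c_L j (n - L - 2)` with `c_3 = 1` and `c_L = L - 3` for `L > 3`; the
kernel `c` is linear up to one term, so a second difference turns this convolution into the
stated linear recurrence.
-/

/-- Steps of a Dyck path with catastrophes: up-step `U`, down-step `D`,
and catastrophe step `C k` of size `k` (valid paths only use `k ≥ 2`). -/
inductive Step where
  | U : Step
  | D : Step
  | C : ℕ → Step
  deriving DecidableEq

/-- The vertical displacement of a step. -/
def Step.val : Step → ℤ
  | .U => 1
  | .D => -1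
  | .C k => -(k : ℤ)

/-- The height (ordinate) of the path after its first `i` steps. -/
def hgt (P : List Step) (i : ℕ) : ℤ := ((P.take i).map Step.val).sum

/-- `InE P` means `P` is a Dyck path with catastrophes (a member of ℰ):
it stays at height ≥ 0, ends on the x-axis, and every catastrophe step
`C k` has `k ≥ 2` and starts at height `k` (hence ends on the x-axis). -/
def InE (P : List Step) : Prop :=
  (∀ i, 0 ≤ hgt P i) ∧ hgt P P.length = 0 ∧
    ∀ i k, P[i]? = some (Step.C k) → 2 ≤ k ∧ hgt P i = (k : ℤ)

/-- `(UD)^k`. -/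
def UDpow (k : ℕ) : List Step := (List.replicate k [Step.U, Step.D]).flatten

/-- `(DU)^k`. -/
def DUpow (k : ℕ) : List Step := (List.replicate k [Step.D, Step.U]).flatten

/-- `U^k`. -/
def Upow (k : ℕ) : List Step := List.replicate k Step.U

/-- `C_s` with the convention `C_1 = D`. -/
def cfin (s : ℕ) : Step := if s = 1 then Step.D else Step.C s

/-- Test whether a step is a catastrophe step. -/
def isCatB : Step → Bool
  | .C _ => true
  | _ => false

/-- The number of catastrophe steps in a path. -/
def catCount (P : List Step) : ℕ := P.countP isCatB

/-- The number of equivalence classes, for the equivalence `E`, of paths of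
length `n` in ℰ. -/
noncomputable def nClasses (E : List Step → List Step → Prop) (n : ℕ) : ℕ :=
  Nat.card (Quot (fun P Q : {P : List Step // InE P ∧ P.length = n} => E P.1 Q.1))

/-- Two paths are `DC`-equivalent when, for every `k ≥ 2`, the occurrences of
the pattern `D C_k` appear at the same positions in both paths. -/
def DCEquiv (P Q : List Step) : Prop :=
  ∀ k, 2 ≤ k → ∀ i : ℕ,
    (P[i]? = some Step.D ∧ P[i + 1]? = some (Step.C k)) ↔
    (Q[i]? = some Step.D ∧ Q[i + 1]? = some (Step.C k))

lemma hgt_add (P : List Step) (a j : ℕ) : hgt P (a + j) = hgt P a + hgt (P.drop a) j := by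
  simp [hgt, List.take_add]

lemma hgt_le (P : List Step) (i : ℕ) : hgt P i ≤ i := by
  have hval : ∀ s ∈ (P.take i).map Step.val, s ≤ 1 := by
    simp only [List.mem_map]
    rintro _ ⟨s, -, rfl⟩
    cases s <;> simp [Step.val]
  calc hgt P i ≤ ((P.take i).map Step.val).length • (1 : ℤ) := List.sum_le_card_nsmul _ _ hval
    _ ≤ i := by simp

lemma hgt_le_add (P : List Step) (a j : ℕ) : hgt P (a + j) ≤ hgt P a + j := by
  rw [hgt_add]; linarith [hgt_le (P.drop a) j]

lemma hgt_succ (P : List Step) {i : ℕ} (h : i < P.length) :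
    hgt P (i + 1) = hgt P i + P[i].val := by
  rw [hgt_add]
  simp [hgt, List.take_one, List.head?_drop, List.getElem?_eq_getElem h]

lemma hgt_of_length_le (P : List Step) {i : ℕ} (h : P.length ≤ i) :
    hgt P i = hgt P P.length := by
  simp [hgt, List.take_of_length_le h]

lemma hgt_append_of_le (P Q : List Step) {i : ℕ} (h : i ≤ P.length) :
    hgt (P ++ Q) i = hgt P i := by
  simp [hgt, List.take_append_of_le_length h]

lemma hgt_append_add (P Q : List Step) (j : ℕ) :
    hgt (P ++ Q) (P.length + j) = hgt P P.length + hgt Q j := by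
  rw [hgt_add, hgt_append_of_le _ _ le_rfl, List.drop_left]

lemma InE.append {P Q : List Step} (hP : InE P) (hQ : InE Q) : InE (P ++ Q) := by
  have hgt_right : ∀ j, hgt (P ++ Q) (P.length + j) = hgt Q j := fun j => by
    rw [hgt_append_add, hP.2.1, zero_add]
  refine ⟨fun i => ?_, ?_, fun i k hi => ?_⟩
  · rcases le_or_gt i P.length with h | h
    · rw [hgt_append_of_le _ _ h]; exact hP.1 i
    · obtain ⟨j, rfl⟩ := Nat.exists_eq_add_of_le h.le
      rw [hgt_right]; exact hQ.1 j
  · rw [List.length_append, hgt_right, hQ.2.1]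
  · rcases lt_or_ge i P.length with h | h
    · rw [List.getElem?_append_left h] at hi
      rw [hgt_append_of_le _ _ h.le]; exact hP.2.2 i k hi
    · obtain ⟨j, rfl⟩ := Nat.exists_eq_add_of_le h
      rw [List.getElem?_append_right h, Nat.add_sub_cancel_left] at hi
      rw [hgt_right]; exact hQ.2.2 j k hi

lemma InE.drop {P : List Step} (hP : InE P) {m : ℕ} (hm : hgt P m = 0) : InE (P.drop m) := by
  have hgt_drop : ∀ j, hgt (P.drop m) j = hgt P (m + j) := fun j => by
    rw [hgt_add, hm, zero_add]
  refine ⟨fun j => hgt_drop j ▸ hP.1 _, ?_, fun j k hj => ?_⟩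
  · rw [hgt_drop, hgt_of_length_le _ (by simp; omega), hP.2.1]
  · rw [List.getElem?_drop] at hj
    exact hgt_drop j ▸ hP.2.2 _ k hj

lemma hgt_emod_two {P : List Step} {i : ℕ} (hi : i ≤ P.length)
    (h : ∀ j < i, ∀ m, P[j]? ≠ some (Step.C m)) : hgt P i % 2 = i % 2 := by
  induction i with
  | zero => rfl
  | succ i ih =>
    have hlt : i < P.length := by omega
    have ih := ih hlt.le fun j hj => h j (by omega)
    rw [hgt_succ P hlt]
    cases hs : P[i] with
    | U | D => simp only [Step.val]; omega
    | C m => exact absurd (List.getElem?_eq_some_iff.mpr ⟨hlt, hs⟩) (h i (by omega) m)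

/-- A catastrophe `C_m` at step `j` forces `j ≥ m ≥ 2` and a return to the axis, after which
the path is too low to be at height `i - 1`; without catastrophes, parity forbids it. -/
lemma InE.hgt_ne_sub_one {P : List Step} (hP : InE P) {i : ℕ} (hi : i ≤ P.length) :
    hgt P i ≠ i - 1 := by
  by_cases hcat : ∃ j < i, ∃ m, P[j]? = some (Step.C m)
  · obtain ⟨j, hj, m, hjm⟩ := hcat
    obtain ⟨hm, hgt_j⟩ := hP.2.2 j m hjm
    obtain ⟨hjlt, hPj⟩ := List.getElem?_eq_some_iff.mp hjm
    have hgt_j1 : hgt P (j + 1) = 0 := by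
      rw [hgt_succ P hjlt, hPj, hgt_j, Step.val, add_neg_cancel]
    have := hgt_le_add P (j + 1) (i - (j + 1))
    have := hgt_le P j
    rw [Nat.add_sub_cancel' hj] at *
    omega
  · push Not at hcat
    have := hgt_emod_two hi hcat
    omega

lemma InE.length_ne_one {P : List Step} (hP : InE P) : P.length ≠ 1 := by
  intro h
  have := hP.hgt_ne_sub_one h.ge
  rw [← h, hP.2.1] at this
  simp [h] at this

/-- `dcSignature P i = some k` records an occurrence of `D C_k` (`k ≥ 2`) at position `i`. -/
def dcSignature (P : List Step) (i : ℕ) : Option ℕ :=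
  match P[i]?, P[i + 1]? with
  | some .D, some (.C k) => if 2 ≤ k then some k else none
  | _, _ => none

lemma dcSignature_eq_some_iff {P : List Step} {i k : ℕ} :
    dcSignature P i = some k ↔ P[i]? = some .D ∧ P[i + 1]? = some (.C k) ∧ 2 ≤ k := by
  unfold dcSignature
  rcases P[i]? with _ | _ | _ | _ <;> rcases P[i + 1]? with _ | _ | _ | _ <;> simp
  omega

lemma dcEquiv_iff_dcSignature_eq (P Q : List Step) :
    DCEquiv P Q ↔ dcSignature P = dcSignature Q := by
  refine ⟨fun h => funext fun i => Option.ext fun k => ?_, fun h k hk i => ?_⟩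
  · simp only [dcSignature_eq_some_iff]
    by_cases hk : 2 ≤ k
    · simpa [hk] using h k hk i
    · simp [hk]
  · simpa [dcSignature_eq_some_iff, hk] using congrArg (· = some k) (congrFun h i)

lemma dcSignature_drop (P : List Step) (m j : ℕ) :
    dcSignature (P.drop m) j = dcSignature P (m + j) := by
  simp [dcSignature, List.getElem?_drop, Nat.add_assoc]

lemma dcSignature_append (P : List Step) {Q : List Step} (hQ : ∀ k, Q[0]? ≠ some (.C k))
    (i : ℕ) : dcSignature (P ++ Q) i =
      if i < P.length then dcSignature P i else dcSignature Q (i - P.length) := by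
  refine Option.ext fun k => ?_
  split_ifs with hi
  · simp only [dcSignature_eq_some_iff, List.getElem?_append_left hi]
    rcases Nat.lt_or_ge (i + 1) P.length with hi' | hi'
    · rw [List.getElem?_append_left hi']
    · have := hQ k
      rw [List.getElem?_append_right hi', show i + 1 - P.length = 0 by omega,
        List.getElem?_eq_none hi']
      simp [this]
  · push Not at hi
    rw [← Nat.add_sub_cancel' hi, ← dcSignature_drop, List.drop_left, Nat.add_sub_cancel_left]

lemma InE.getElem?_zero_ne {P : List Step} (hP : InE P) (k : ℕ) : P[0]? ≠ some (.C k) := by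
  intro h
  have := hP.2.2 0 k h
  simp [hgt] at this
  omega

lemma dcSignature_eq_none_of_forall_not_mem {P : List Step} (h : ∀ k, Step.C k ∉ P) (i : ℕ) :
    dcSignature P i = none :=
  Option.eq_none_iff_forall_ne_some.mpr fun k hk =>
    h k (List.mem_of_getElem? (dcSignature_eq_some_iff.mp hk).2.1)

lemma C_not_mem_UDpow (m k : ℕ) : Step.C k ∉ UDpow m := by
  simp [UDpow, List.mem_flatten, List.mem_replicate]

lemma C_not_mem_Upow (h k : ℕ) : Step.C k ∉ Upow h := by
  simp [Upow, List.mem_replicate]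

@[simp]
lemma length_Upow (h : ℕ) : (Upow h).length = h := by simp [Upow]

lemma hgt_Upow (h i : ℕ) : hgt (Upow h) i = min i h := by
  simp [Upow, hgt, List.take_replicate, Step.val]

lemma inE_nil : InE [] :=
  ⟨fun _ => by simp [hgt], rfl, fun _ _ h => by simp at h⟩

lemma inE_UD : InE [.U, .D] := by
  refine ⟨fun i => ?_, rfl, fun i k h => ?_⟩
  · rcases i with _ | _ | i <;> simp [hgt, Step.val]
  · rcases i with _ | _ | i <;> simp at h

lemma inE_UUC : InE [.U, .U, .C 2] := by
  refine ⟨fun i => ?_, rfl, fun i k h => ?_⟩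
  · rcases i with _ | _ | _ | i <;> simp [hgt, Step.val]
  · rcases i with _ | _ | _ | i <;> simp at h
    subst h; simp [hgt, Step.val]

lemma inE_UDpow (m : ℕ) : InE (UDpow m) := by
  induction m with
  | zero => exact inE_nil
  | succ m ih =>
    rw [UDpow, List.replicate_succ, List.flatten_cons]
    exact inE_UD.append ih

/-- Witnesses: `(UD)^m` for even lengths, `U U C_2 (UD)^m` for odd ones. -/
lemma exists_inE_dcSignature_eq_none {n : ℕ} (hn : n ≠ 1) :
    ∃ P, InE P ∧ P.length = n ∧ dcSignature P = fun _ => none := by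
  have hUD : ∀ m, (UDpow m).length = 2 * m := fun m => by simp [UDpow]; ring
  obtain ⟨m, rfl | rfl⟩ : ∃ m, n = 2 * m ∨ n = 2 * m + 3 := by
    rcases Nat.even_or_odd' n with ⟨m, rfl | rfl⟩
    · exact ⟨m, .inl rfl⟩
    · exact ⟨m - 1, .inr (by omega)⟩
  · exact ⟨UDpow m, inE_UDpow m, hUD m,
      funext (dcSignature_eq_none_of_forall_not_mem (C_not_mem_UDpow m))⟩
  · refine ⟨[.U, .U, .C 2] ++ UDpow m, inE_UUC.append (inE_UDpow m), by simp [hUD],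
      funext fun i => ?_⟩
    rw [dcSignature_append _ (inE_UDpow m).getElem?_zero_ne,
      dcSignature_eq_none_of_forall_not_mem (C_not_mem_UDpow m)]
    rcases i with _ | _ | _ | i <;> simp [dcSignature]

def tower (k : ℕ) : List Step := Upow (k + 1) ++ [.D, .C k]

lemma length_tower (k : ℕ) : (tower k).length = k + 3 := by
  simp [tower]

lemma hgt_tower (k i : ℕ) :
    hgt (tower k) i = if i ≤ k + 1 then (i : ℤ) else if i = k + 2 then (k : ℤ) else 0 := by
  rcases le_or_gt i (k + 1) with hi | hi
  · rw [tower, hgt_append_of_le _ _ (by simpa using hi), hgt_Upow, if_pos hi]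
    omega
  · obtain ⟨j, rfl⟩ := Nat.exists_eq_add_of_le hi.le
    have := hgt_append_add (Upow (k + 1)) [.D, .C k] j
    rw [length_Upow, hgt_Upow] at this
    rw [tower, this]
    rcases j with _ | _ | j <;> simp [hgt, Step.val]; omega

lemma getElem?_tower_eq_C {k i k' : ℕ} (h : (tower k)[i]? = some (.C k')) :
    i = k + 2 ∧ k' = k := by
  have hi : k + 1 ≤ i := by
    by_contra! hi
    rw [tower, List.getElem?_append_left (by simpa using hi)] at h
    exact C_not_mem_Upow _ _ (List.mem_of_getElem? h)
  obtain ⟨j, rfl⟩ := Nat.exists_eq_add_of_le hi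
  rw [tower, List.getElem?_append_right (by simp), length_Upow, Nat.add_sub_cancel_left] at h
  rcases j with _ | _ | j <;> simp at h
  exact ⟨rfl, h.symm⟩

lemma inE_tower {k : ℕ} (hk : 2 ≤ k) : InE (tower k) := by
  refine ⟨fun i => ?_, ?_, fun i k' h => ?_⟩
  · rw [hgt_tower]; split_ifs <;> positivity
  · rw [hgt_tower, length_tower]; simp
  · obtain ⟨rfl, rfl⟩ := getElem?_tower_eq_C h
    rw [hgt_tower]; simp [hk]

lemma dcSignature_tower {k : ℕ} (hk : 2 ≤ k) (i : ℕ) :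
    dcSignature (tower k) i = if i = k + 1 then some k else none := by
  rw [tower, dcSignature_append _ (by simp), length_Upow,
    dcSignature_eq_none_of_forall_not_mem (C_not_mem_Upow _)]
  split_ifs with h1 h2 h2
  · omega
  · rfl
  · rw [h2]; simp [dcSignature, hk]
  · rcases Nat.exists_eq_add_of_lt (by omega : k + 1 < i) with ⟨j, rfl⟩
    simp [dcSignature, show k + 1 + j + 1 - (k + 1) = j + 1 by omega]

/-- The signature of a path whose first `D C_k` occurs at position `L`, followed by a path
of signature `g`. -/
def prependDC (L k : ℕ) (g : ℕ → Option ℕ) : ℕ → Option ℕ :=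
  fun i => if i < L + 2 then (if i = L then some k else none) else g (i - (L + 2))

/-- The sizes `k` for which a path in ℰ can have its first `D C_k` at position `L`. -/
def firstDCSizes (L : ℕ) : Finset ℕ := (Finset.Icc 2 (L - 1)).filter (· + 2 ≠ L)

def dcSignatures (n : ℕ) : Set (ℕ → Option ℕ) :=
  {f | ∃ P, InE P ∧ P.length = n ∧ dcSignature P = f}

lemma prependDC_mem_dcSignatures {L k m : ℕ} {g : ℕ → Option ℕ} (hk : k ∈ firstDCSizes L)
    (hg : g ∈ dcSignatures m) : prependDC L k g ∈ dcSignatures (L + 2 + m) := by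
  simp only [firstDCSizes, Finset.mem_filter, Finset.mem_Icc] at hk
  obtain ⟨Q, hQ, rfl, rfl⟩ := hg
  obtain ⟨B, hB, hBlen, hBsig⟩ :=
    exists_inE_dcSignature_eq_none (n := L - (k + 1)) (by omega)
  have hTQ := (inE_tower hk.1.1).append hQ
  refine ⟨B ++ (tower k ++ Q), hB.append hTQ, by simp [hBlen, length_tower]; omega,
    funext fun i => ?_⟩
  rw [dcSignature_append _ hTQ.getElem?_zero_ne, dcSignature_append _ hQ.getElem?_zero_ne,
    dcSignature_tower hk.1.1, hBsig, length_tower, hBlen, prependDC]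
  split_ifs <;> first | rfl | omega | (congr 1; omega)

lemma InE.hgt_of_dcSignature_eq_some {P : List Step} (hP : InE P) {L k : ℕ}
    (h : dcSignature P L = some k) : hgt P L = k + 1 ∧ hgt P (L + 2) = 0 := by
  obtain ⟨hD, hC, -⟩ := dcSignature_eq_some_iff.mp h
  obtain ⟨hL, hPL⟩ := List.getElem?_eq_some_iff.mp hD
  obtain ⟨hL1, hPL1⟩ := List.getElem?_eq_some_iff.mp hC
  have h1 := hgt_succ P hL
  have h2 : hgt P (L + 2) = _ := hgt_succ P hL1
  rw [hPL, Step.val, (hP.2.2 _ _ hC).2] at h1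
  rw [hPL1, Step.val, (hP.2.2 _ _ hC).2] at h2
  omega

lemma InE.mem_firstDCSizes {P : List Step} (hP : InE P) {L k : ℕ}
    (h : dcSignature P L = some k) : k ∈ firstDCSizes L := by
  obtain ⟨hD, -, hk⟩ := dcSignature_eq_some_iff.mp h
  have hgt_L := (hP.hgt_of_dcSignature_eq_some h).1
  have := hgt_le P L
  have := hP.hgt_ne_sub_one (List.getElem?_eq_some_iff.mp hD).1.le
  simp only [firstDCSizes, Finset.mem_filter, Finset.mem_Icc]
  omega

lemma dcSignature_eq_prependDC {P : List Step} {L k : ℕ} (h : dcSignature P L = some k)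
    (hmin : ∀ i < L, dcSignature P i = none) :
    dcSignature P = prependDC L k (dcSignature (P.drop (L + 2))) := by
  funext i
  rw [prependDC]
  split_ifs with h1 h2
  · exact h2 ▸ h
  · rcases Nat.lt_or_ge i L with hi | hi
    · exact hmin i hi
    · obtain rfl : i = L + 1 := by omega
      refine Option.eq_none_iff_forall_ne_some.mpr fun k' hk' => ?_
      have := (dcSignature_eq_some_iff.mp h).2.1
      simp [(dcSignature_eq_some_iff.mp hk').1] at this
  · rw [dcSignature_drop, Nat.add_sub_cancel' (by omega)]

theorem dcSignatures_eq (n : ℕ) :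
    dcSignatures n = {f | n ≠ 1 ∧ f = fun _ => none} ∪
      ⋃ p ∈ (Finset.Icc 3 (n - 2)).sigma firstDCSizes,
        prependDC p.1 p.2 '' dcSignatures (n - (p.1 + 2)) := by
  ext f
  simp only [Set.mem_union, Set.mem_ofPred_eq, Set.mem_iUnion, Set.mem_image, Finset.mem_sigma,
    Finset.mem_Icc, exists_prop]
  constructor
  · rintro ⟨P, hP, rfl, rfl⟩
    by_cases hnone : ∃ i, dcSignature P i ≠ none
    · right
      obtain ⟨k, hk⟩ := Option.ne_none_iff_exists'.mp (Nat.find_spec hnone)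
      have hmin : ∀ i < Nat.find hnone, dcSignature P i = none := fun i hi =>
        not_not.mp (Nat.find_min hnone hi)
      have hsize := hP.mem_firstDCSizes hk
      have hlen : Nat.find hnone + 1 < P.length :=
        (List.getElem?_eq_some_iff.mp (dcSignature_eq_some_iff.mp hk).2.1).1
      have hL : 3 ≤ Nat.find hnone := by
        simp only [firstDCSizes, Finset.mem_filter, Finset.mem_Icc] at hsize; omega
      refine ⟨⟨Nat.find hnone, k⟩, ⟨⟨hL, by dsimp only; omega⟩, hsize⟩, _,
        ⟨P.drop (Nat.find hnone + 2), hP.drop (hP.hgt_of_dcSignature_eq_some hk).2,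
          by simp, rfl⟩, (dcSignature_eq_prependDC hk hmin).symm⟩
    · push Not at hnone
      exact .inl ⟨hP.length_ne_one, funext hnone⟩
  · rintro (⟨hn, rfl⟩ | ⟨⟨L, k⟩, ⟨hL, hk⟩, g, hg, rfl⟩)
    · exact exists_inE_dcSignature_eq_none hn
    · dsimp only at hL hk ⊢
      simpa [show L + 2 + (n - (L + 2)) = n by omega] using prependDC_mem_dcSignatures hk hg

lemma prependDC_eq_prependDC {L k L' k' : ℕ} {g g' : ℕ → Option ℕ}
    (h : prependDC L k g = prependDC L' k' g') : L = L' ∧ k = k' ∧ g = g' := by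
  obtain rfl : L = L' := by
    by_contra hne
    rcases Nat.lt_or_gt_of_ne hne with hlt | hlt
    · simpa [prependDC, hlt.ne, show L < L' + 2 by omega] using congrFun h L
    · simpa [prependDC, hlt.ne, show L' < L + 2 by omega] using congrFun h L'
  obtain rfl : k = k' := by simpa [prependDC] using congrFun h L
  exact ⟨rfl, rfl, funext fun j => by simpa [prependDC] using congrFun h (L + 2 + j)⟩

lemma dcSignatures_finite (n : ℕ) : (dcSignatures n).Finite := by
  induction n using Nat.strong_induction_on with
  | _ n ih =>
    rw [dcSignatures_eq]
    refine ((Set.finite_singleton _).subset fun f hf => hf.2).union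
      (Set.Finite.biUnion (Finset.finite_toSet _) fun p hp => (ih _ ?_).image _)
    simp only [Finset.coe_sigma, Set.mem_sigma_iff, Finset.coe_Icc, Set.mem_Icc] at hp
    omega

theorem ncard_dcSignatures (n : ℕ) :
    (dcSignatures n).ncard = (if n = 1 then 0 else 1) +
      ∑ L ∈ Finset.Icc 3 (n - 2), (firstDCSizes L).card * (dcSignatures (n - (L + 2))).ncard := by
  have hbase : {f : ℕ → Option ℕ | n ≠ 1 ∧ f = fun _ => none}.ncard = if n = 1 then 0 else 1 := by
    split_ifs with hn <;> simp [hn]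
  have hdisj : Disjoint {f : ℕ → Option ℕ | n ≠ 1 ∧ f = fun _ => none}
      (⋃ p ∈ (Finset.Icc 3 (n - 2)).sigma firstDCSizes,
        prependDC p.1 p.2 '' dcSignatures (n - (p.1 + 2))) := by
    simp only [Set.disjoint_left, Set.mem_iUnion, Set.mem_image, not_exists, not_and]
    rintro _ ⟨-, rfl⟩ p - g - h
    simpa [prependDC] using congrFun h p.1
  have hpairwise : (↑((Finset.Icc 3 (n - 2)).sigma firstDCSizes) : Set ((_ : ℕ) × ℕ))
      |>.PairwiseDisjoint fun p => prependDC p.1 p.2 '' dcSignatures (n - (p.1 + 2)) := by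
    rintro ⟨L, k⟩ - ⟨L', k'⟩ - hne
    refine Set.disjoint_left.mpr ?_
    rintro _ ⟨g, -, rfl⟩ ⟨g', -, h⟩
    obtain ⟨rfl, rfl, -⟩ := prependDC_eq_prependDC h
    exact hne rfl
  have hfin := dcSignatures_finite n
  rw [dcSignatures_eq, Set.finite_union] at hfin
  rw [dcSignatures_eq, Set.ncard_union_eq hdisj hfin.1 hfin.2, hbase, ← Finset.set_biUnion_coe,
    Set.Finite.ncard_biUnion (Finset.finite_toSet _) (fun p _ => (dcSignatures_finite _).image _)
      hpairwise, finsum_mem_coe_finset, Finset.sum_sigma]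
  congr 1
  refine Finset.sum_congr rfl fun L _ => ?_
  simp only [Set.ncard_image_of_injective _
    (fun g g' h => (prependDC_eq_prependDC h).2.2), Finset.sum_const, smul_eq_mul]

theorem nClasses_DCEquiv (n : ℕ) : nClasses DCEquiv n = (dcSignatures n).ncard := by
  let sig : {P : List Step // InE P ∧ P.length = n} → ℕ → Option ℕ := fun P => dcSignature P.1
  have hrel : (fun P Q : {P : List Step // InE P ∧ P.length = n} => DCEquiv P.1 Q.1) =
      (Setoid.ker sig).r := by
    funext P Q
    exact propext (dcEquiv_iff_dcSignature_eq P.1 Q.1)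
  have hrange : Set.range sig = dcSignatures n := by
    ext f
    simp [sig, dcSignatures, and_assoc]
  rw [nClasses, hrel, ← hrange, ← Nat.card_coe_set_eq]
  exact Nat.card_congr (Setoid.quotientKerEquivRange sig)

lemma card_firstDCSizes_add_three (i : ℕ) :
    (firstDCSizes (i + 3)).card = i + if i = 0 then 1 else 0 := by
  rcases i with _ | i
  · rfl
  · have : firstDCSizes (i + 1 + 3) = (Finset.Icc 2 (i + 3)).erase (i + 2) := by
      ext k
      simp only [firstDCSizes, Finset.mem_filter, Finset.mem_erase, Finset.mem_Icc]
      omega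
    rw [this, Finset.card_erase_of_mem (by simp), Nat.card_Icc, if_neg i.succ_ne_zero]
    omega

section FirstDCRecursion

variable {a : ℕ → ℕ}
  (ha : ∀ n, a n = (if n = 1 then 0 else 1) +
    ∑ L ∈ Finset.Icc 3 (n - 2), (firstDCSizes L).card * a (n - (L + 2)))
include ha

lemma apply_add_five (m : ℕ) :
    a (m + 5) = 1 + a m + ∑ i ∈ Finset.range (m + 1), i * a (m - i) := by
  rw [ha, if_neg (by omega), show m + 5 - 2 = m + 3 by omega,
    ← Finset.Ico_add_one_right_eq_Icc, Finset.sum_Ico_eq_sum_range,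
    show m + 3 + 1 - 3 = m + 1 by omega, add_assoc]
  have hterm : ∀ i, (firstDCSizes (3 + i)).card * a (m + 5 - (3 + i + 2)) =
      (if i = 0 then a m else 0) + i * a (m - i) := fun i => by
    rw [add_comm 3 i, card_firstDCSizes_add_three, show m + 5 - (i + 3 + 2) = m - i by omega]
    split_ifs <;> first | omega | (subst_vars; simp)
  rw [Finset.sum_congr rfl fun i _ => hterm i, Finset.sum_add_distrib]
  simp

lemma apply_add_seven (N : ℕ) :
    (a (N + 7) : ℤ) = 2 * a (N + 6) - a (N + 5) + a (N + 2) - a (N + 1) + a N := by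
  -- the second difference of `m ↦ ∑ i ≤ m, i * a (m - i)` is `m ↦ a (m + 1)`
  have hweighted : ∀ m, ∑ i ∈ Finset.range (m + 1 + 1), i * a (m + 1 - i) =
      ∑ i ∈ Finset.range (m + 1), i * a (m - i) + ∑ i ∈ Finset.range (m + 1), a (m - i) := by
    intro m
    rw [Finset.sum_range_succ', ← Finset.sum_add_distrib]
    simp [add_mul]
  have hplain : ∀ m, ∑ i ∈ Finset.range (m + 1 + 1), a (m + 1 - i) =
      ∑ i ∈ Finset.range (m + 1), a (m - i) + a (m + 1) := by
    intro m
    rw [Finset.sum_range_succ']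
    simp
  have := apply_add_five ha (N + 1 + 1)
  have := apply_add_five ha (N + 1)
  have := apply_add_five ha N
  have := hweighted (N + 1)
  have := hweighted N
  have := hplain N
  rw [show N + 7 = N + 1 + 1 + 5 by rfl, show N + 6 = N + 1 + 5 by rfl,
    show N + 2 = N + 1 + 1 by rfl]
  omega

theorem firstDC_recurrence :
    a 0 = 1 ∧ a 1 = 0 ∧ a 2 = 1 ∧ a 3 = 1 ∧ a 4 = 1 ∧ a 5 = 2 ∧ a 6 = 2 ∧
    ∀ n, 7 ≤ n → (a n : ℤ) = 2 * a (n - 1) - a (n - 2) + a (n - 5) - a (n - 6) + a (n - 7) := by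
  have hsmall : ∀ n < 5, a n = if n = 1 then 0 else 1 := fun n hn => by
    rw [ha, Finset.Icc_eq_empty (by omega), Finset.sum_empty, add_zero]
  have h5 := apply_add_five ha 0
  have h6 := apply_add_five ha 1
  simp only [Finset.sum_range_succ, Finset.sum_range_zero] at h5 h6
  refine ⟨hsmall 0 (by omega), hsmall 1 (by omega), hsmall 2 (by omega), hsmall 3 (by omega),
    hsmall 4 (by omega), by simp [h5, hsmall 0], by simp [h6, hsmall 0, hsmall 1], ?_⟩
  intro n hn
  obtain ⟨N, rfl⟩ := Nat.exists_eq_add_of_le' hn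
  simpa using apply_add_seven ha N

end FirstDCRecursion

/-- The number `j n` of DC-equivalence classes of paths of length `n` in ℰ
satisfies `j 0 = 1`, `j 1 = 0`, `j 2 = j 3 = j 4 = 1`, `j 5 = 2`, `j 6 = 2` and
`j n = 2 j(n-1) - j(n-2) + j(n-5) - j(n-6) + j(n-7)` for `n ≥ 7`. -/
theorem count_DCEquiv_classes :
    nClasses DCEquiv 0 = 1 ∧ nClasses DCEquiv 1 = 0 ∧ nClasses DCEquiv 2 = 1 ∧
    nClasses DCEquiv 3 = 1 ∧ nClasses DCEquiv 4 = 1 ∧ nClasses DCEquiv 5 = 2 ∧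
    nClasses DCEquiv 6 = 2 ∧
    ∀ n, 7 ≤ n → (nClasses DCEquiv n : ℤ) =
      2 * nClasses DCEquiv (n - 1) - nClasses DCEquiv (n - 2)
        + nClasses DCEquiv (n - 5) - nClasses DCEquiv (n - 6)
        + nClasses DCEquiv (n - 7) := by
  refine firstDC_recurrence fun n => ?_
  simp only [nClasses_DCEquiv]
  exact ncard_dcSignatures n
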